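/- For every m ∈ ℕ, if N points z₁,…,z_N ∈ S¹ and nonnegative weights ν₁,…,ν_N satisfy Σᵢ νᵢ p(zᵢ) = (1/(2π))∫_{S¹} p dθ for all real polynomials p on ℝ² of degree at most m, then N ≥ m+1. (Proof: applying the formula to the real and imaginary parts of f(z) = (z−z₁)⋯(z−z_N) for N ≤ m yields 0 = (1/(2π))∫_{S¹} f dθ = (−1)^N z₁⋯z_N ≠ 0.) -/

import Mathlib

open MeasureTheory Real Complex

/-- Evaluation of a real polynomial on `ℝ²` at a point of `ℂ ≅ ℝ²`. -/
noncomputable def circleEval (p : MvPolynomial (Fin 2) ℝ) (z : ℂ) : ℝ :=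
  MvPolynomial.eval (fun j => ![z.re, z.im] j) p

/-- `IsCircleCubature m N z ν` : the points `z₁,…,z_N ∈ S¹ ⊆ ℂ` with
nonnegative weights `ν₁,…,ν_N` satisfy
`Σ νᵢ p(zᵢ) = (1/(2π)) ∫_{S¹} p dθ` for all real polynomials `p` on `ℝ²` of
degree at most `m`. -/
noncomputable def IsCircleCubature (m N : ℕ) (z : Fin N → ℂ) (ν : Fin N → ℝ) : Prop :=
  (∀ i, ‖z i‖ = 1) ∧ (∀ i, 0 ≤ ν i) ∧
  ∀ p : MvPolynomial (Fin 2) ℝ, p.totalDegree ≤ m →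
    ∑ i, ν i * circleEval p (z i) =
      (1 / (2 * π)) * ∫ θ in (0 : ℝ)..(2 * π), circleEval p (Complex.exp (θ * Complex.I))

/-- `N_m(S¹)`: the minimal number of nodes of a nonnegative-weight cubature
formula on the unit circle with degree of precision `m`. -/
noncomputable def circleCubatureMinNodes (m : ℕ) : ℕ :=
  sInf {N : ℕ | ∃ z ν, IsCircleCubature m N z ν}


noncomputable def cPart (g : ℂ → ℝ) (hg : g 0 = 0) (q : MvPolynomial (Fin 2) ℂ) :
    MvPolynomial (Fin 2) ℝ := AddMonoidAlgebra.ofCoeff (Finsupp.mapRange g hg (AddMonoidAlgebra.coeff q))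

lemma cPart_coeff (g : ℂ → ℝ) (hg : g 0 = 0) (q : MvPolynomial (Fin 2) ℂ) (d) :
    MvPolynomial.coeff d (cPart g hg q) = g (MvPolynomial.coeff d q) := rfl

lemma cPart_support (g hg) (q : MvPolynomial (Fin 2) ℂ) :
    (cPart g hg q).support ⊆ q.support := by
  intro d hd
  simp only [MvPolynomial.mem_support_iff, cPart_coeff] at hd ⊢
  intro h0
  exact hd (by rw [h0, hg])

lemma cPart_eval (g : ℂ → ℝ) (hg : g 0 = 0)
    (hadd : ∀ a b, g (a + b) = g a + g b) (hmul : ∀ (a : ℂ) (r : ℝ), g (a * r) = g a * r)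
    (q : MvPolynomial (Fin 2) ℂ) (v : Fin 2 → ℝ) :
    MvPolynomial.eval v (cPart g hg q) = g (MvPolynomial.eval (fun j => (v j : ℂ)) q) := by
  rw [MvPolynomial.eval_eq', MvPolynomial.eval_eq']
  rw [Finset.sum_subset (cPart_support g hg q) (by
    intro d _ hd
    rw [MvPolynomial.notMem_support_iff.mp hd, zero_mul])]
  have hgsum : ∀ (s : Finset (Fin 2 →₀ ℕ)) (F : (Fin 2 →₀ ℕ) → ℂ),
      g (∑ d ∈ s, F d) = ∑ d ∈ s, g (F d) := by
    intro s F
    induction s using Finset.induction with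
    | empty => simpa using hg
    | insert _ _ hx ih => rw [Finset.sum_insert hx, Finset.sum_insert hx, hadd, ih]
  rw [hgsum]
  refine Finset.sum_congr rfl fun d _ => ?_
  rw [cPart_coeff]
  have : (∏ j, ((v j : ℂ)) ^ d j) = ((∏ j, (v j) ^ d j : ℝ) : ℂ) := by push_cast; ring
  rw [this, hmul]

lemma cPart_totalDegree (g hg) (q : MvPolynomial (Fin 2) ℂ) :
    (cPart g hg q).totalDegree ≤ q.totalDegree :=
  Finset.sup_mono (cPart_support g hg q)

lemma td_aeval (f : Polynomial ℂ) (g : MvPolynomial (Fin 2) ℂ) (hgd : g.totalDegree ≤ 1) :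
    (Polynomial.aeval g f).totalDegree ≤ f.natDegree := by
  rw [Polynomial.aeval_def, Polynomial.eval₂_eq_sum, Polynomial.sum]
  refine (MvPolynomial.totalDegree_finset_sum _ _).trans (Finset.sup_le fun n hn => ?_)
  calc (MvPolynomial.C (f.coeff n) * g ^ n).totalDegree
      ≤ (MvPolynomial.C (f.coeff n)).totalDegree + (g ^ n).totalDegree :=
        MvPolynomial.totalDegree_mul _ _
    _ ≤ 0 + n * g.totalDegree := by
        gcongr
        · exact le_of_eq (MvPolynomial.totalDegree_C _)
        · exact MvPolynomial.totalDegree_pow _ _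
    _ ≤ n * 1 := by simpa using Nat.mul_le_mul_left n hgd
    _ ≤ f.natDegree := by simpa using Polynomial.le_natDegree_of_mem_supp n hn

lemma key_integral (f : Polynomial ℂ) :
    ∫ θ in (0:ℝ)..(2*π), Polynomial.eval (Complex.exp (θ * Complex.I)) f
      = 2 * π * f.coeff 0 := by
  have hint : ∀ n : ℕ, IntervalIntegrable (fun θ : ℝ => f.coeff n * Complex.exp (θ * Complex.I) ^ n)
      volume 0 (2*π) := by
    intro n
    apply Continuous.intervalIntegrable
    exact continuous_const.mul ((Complex.continuous_exp.comp
      ((Complex.continuous_ofReal.mul continuous_const))).pow n)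
  have : ∀ θ : ℝ, Polynomial.eval (Complex.exp (θ * Complex.I)) f
      = ∑ n ∈ Finset.range (f.natDegree + 1), f.coeff n * Complex.exp (θ * Complex.I) ^ n := by
    intro θ; rw [Polynomial.eval_eq_sum_range]
  rw [intervalIntegral.integral_congr (fun θ _ => this θ),
    intervalIntegral.integral_finset_sum (fun n _ => hint n)]
  rw [Finset.sum_eq_single 0]
  · simp [intervalIntegral.integral_const]
  · intro n hn hn0
    have hc : (n : ℂ) * Complex.I ≠ 0 := by
      simp [Complex.ext_iff, Nat.pos_of_ne_zero hn0]
      exact_mod_cast hn0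
    have hexp : ∀ θ : ℝ, Complex.exp (θ * Complex.I) ^ n
        = Complex.exp ((n * Complex.I) * θ) := by
      intro θ; rw [← Complex.exp_nat_mul]; ring_nf
    have heq : (fun θ : ℝ => f.coeff n * Complex.exp (θ * Complex.I) ^ n)
        = fun θ : ℝ => f.coeff n * Complex.exp ((n * Complex.I) * θ) :=
      funext fun θ => by rw [hexp]
    rw [heq, intervalIntegral.integral_const_mul, integral_exp_mul_complex hc]
    have h1 : (n:ℂ) * Complex.I * ((2*π:ℝ):ℂ) = n * (2 * π * Complex.I) := by push_cast; ring
    rw [h1, Complex.exp_nat_mul, Complex.exp_two_pi_mul_I]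
    simp
  · simp

theorem circle_cubature_node_lower_bound' (m N : ℕ) (z : Fin N → ℂ)
    (ν : Fin N → ℝ)
    (h : (∀ i, ‖z i‖ = 1) ∧ (∀ i, 0 ≤ ν i) ∧
      ∀ p : MvPolynomial (Fin 2) ℝ, p.totalDegree ≤ m →
        ∑ i, ν i * circleEval p (z i) =
          (1 / (2 * π)) * ∫ θ in (0 : ℝ)..(2 * π),
            circleEval p (Complex.exp (θ * Complex.I))) : m + 1 ≤ N := by
  by_contra hN
  have hNm : N ≤ m := by omega
  set f : Polynomial ℂ := ∏ i, (Polynomial.X - Polynomial.C (z i)) with hf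
  set gp : MvPolynomial (Fin 2) ℂ :=
    MvPolynomial.X 0 + MvPolynomial.C Complex.I * MvPolynomial.X 1 with hgp
  set q : MvPolynomial (Fin 2) ℂ := Polynomial.aeval gp f with hq
  have hgd : gp.totalDegree ≤ 1 := by
    refine (MvPolynomial.totalDegree_add _ _).trans (max_le ?_ ?_)
    · exact le_of_eq (MvPolynomial.totalDegree_X _)
    · refine (MvPolynomial.totalDegree_mul _ _).trans ?_
      simp [MvPolynomial.totalDegree_C, MvPolynomial.totalDegree_X]
  have hfd : f.natDegree = N := by
    rw [hf, Polynomial.natDegree_prod _ _ (fun i _ => Polynomial.X_sub_C_ne_zero (z i))]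
    simp
  have hqd : q.totalDegree ≤ m := (td_aeval f gp hgd).trans (by rw [hfd]; exact hNm)
  have heval : ∀ w : ℂ,
      MvPolynomial.eval (fun j => ((![w.re, w.im] j : ℝ) : ℂ)) q = Polynomial.eval w f := by
    intro w
    set v : Fin 2 → ℂ := fun j => ((![w.re, w.im] j : ℝ) : ℂ) with hv
    have h1 := Polynomial.aeval_algHom_apply (MvPolynomial.aeval (R := ℂ) v) gp f
    have h2 : MvPolynomial.aeval v gp = w := by
      simp only [hgp, map_add, map_mul, MvPolynomial.aeval_X, MvPolynomial.aeval_C, hv]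
      simp only [Algebra.algebraMap_self, RingHom.id_apply, Matrix.cons_val_zero, Matrix.cons_val_one,
        Matrix.head_cons]
      rw [mul_comm I, Complex.re_add_im]
    rw [h2] at h1
    have h3 : MvPolynomial.aeval v q = MvPolynomial.eval v q := by
      rw [← MvPolynomial.coe_aeval_eq_eval]; rfl
    rw [← hq, h3] at h1
    rw [← h1, Polynomial.coe_aeval_eq_eval]
  have hfz : ∀ i, Polynomial.eval (z i) f = 0 := by
    intro i
    rw [hf, Polynomial.eval_prod]
    exact Finset.prod_eq_zero (Finset.mem_univ i) (by simp)
  have hcont : Continuous fun θ : ℝ => Polynomial.eval (Complex.exp (θ * Complex.I)) f :=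
    f.continuous_aeval.comp (Complex.continuous_exp.comp
      (Complex.continuous_ofReal.mul continuous_const))
  have key : ∀ (L : ℂ →L[ℝ] ℝ), (∀ (a : ℂ) (r : ℝ), L (a * r) = L a * r) →
      L (f.coeff 0) = 0 := by
    intro L hmul
    set p : MvPolynomial (Fin 2) ℝ := cPart L (map_zero L) q with hp
    have hev : ∀ w : ℂ, circleEval p w = L (Polynomial.eval w f) := by
      intro w
      unfold circleEval
      rw [hp, cPart_eval L (map_zero L) (fun a b => map_add L a b) hmul q, heval w]
    have hform := h.2.2 p ((cPart_totalDegree _ _ q).trans hqd)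
    have hLHS : ∑ i, ν i * circleEval p (z i) = 0 :=
      Finset.sum_eq_zero fun i _ => by rw [hev, hfz i, map_zero, mul_zero]
    have hI : (∫ θ in (0:ℝ)..(2*π), circleEval p (Complex.exp (θ * Complex.I)))
        = L (2 * π * f.coeff 0) := by
      rw [intervalIntegral.integral_congr (fun θ _ => hev _),
        L.intervalIntegral_comp_comm (hcont.intervalIntegrable _ _), key_integral]
    rw [hLHS, hI] at hform
    have hL2 : L (2 * π * f.coeff 0) = L (f.coeff 0) * (2 * π) := by
      rw [mul_comm]
      have : ((2 * π : ℝ) : ℂ) = 2 * (π : ℂ) := by push_cast; ring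
      rw [← this, hmul]
    rw [hL2] at hform
    have hπ : (2 * π) ≠ 0 := by positivity
    field_simp at hform
    linarith [hform]
  have h0 : f.coeff 0 = 0 := by
    have hre := key Complex.reCLM (fun a r => by simp)
    have him := key Complex.imCLM (fun a r => by simp)
    exact Complex.ext (by simpa using hre) (by simpa using him)
  have h0' : f.coeff 0 = ∏ i, -(z i) := by
    rw [Polynomial.coeff_zero_eq_eval_zero, hf, Polynomial.eval_prod]
    simp
  have hnorm : ‖f.coeff 0‖ = 1 := by
    rw [h0', norm_prod]
    exact Finset.prod_eq_one fun i _ => by rw [norm_neg]; exact h.1 i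
  rw [h0] at hnorm
  simp at hnorm

/-- any nonnegative-weight cubature formula on `S¹` exact on all
real polynomials of degree at most `m` has at least `m+1` nodes. -/
theorem circle_cubature_node_lower_bound (m N : ℕ) (z : Fin N → ℂ)
    (ν : Fin N → ℝ) (h : IsCircleCubature m N z ν) : m + 1 ≤ N :=
  circle_cubature_node_lower_bound' m N z ν h
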